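/- Let A(K_{n,n}) be the adjacency matrix of the complete bipartite graph with both parts of size n; its spectrum consists of 2n−2 zero eigenvalues and the pair ±n. Fix τ > 0. Then the Gibbs entropy S(ρ_{−A(K_{n,n})}^τ) → 0 as n → ∞. -/

import Mathlib

/-!
Shifting a spectrum by a constant leaves the Gibbs entropy unchanged, and shifting the spectrum
`{-n, n, 0^(2n-2)}` of `-A(K_{n,n})` by `n` gives `{0, 2n, n^(2n-2)}`. For the shifted spectrum
the partition function is `1 + O(n e^{-τn})` and the weighted energy `Σ λ e^{-τλ}` is
`O(n² e^{-τn})`, so the entropy `τ E / Z + log Z` tends to `τ · 0 / 1 + log 1 = 0`.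
-/

open Real Filter Topology

noncomputable def partitionFunction (τ : ℝ) (s : Multiset ℝ) : ℝ :=
  (s.map fun μ => exp (-τ * μ)).sum

noncomputable def weightedEnergy (τ : ℝ) (s : Multiset ℝ) : ℝ :=
  (s.map fun μ => μ * exp (-τ * μ)).sum

noncomputable def gibbsEntropy (τ : ℝ) (s : Multiset ℝ) : ℝ :=
  τ * weightedEnergy τ s / partitionFunction τ s + log (partitionFunction τ s)

lemma partitionFunction_map_add (τ c : ℝ) (s : Multiset ℝ) :
    partitionFunction τ (s.map (· + c)) = exp (-τ * c) * partitionFunction τ s := by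
  simp only [partitionFunction, Multiset.map_map, Function.comp_def, mul_add, exp_add,
    ← Multiset.sum_map_mul_left]
  simp_rw [mul_comm]

lemma weightedEnergy_map_add (τ c : ℝ) (s : Multiset ℝ) :
    weightedEnergy τ (s.map (· + c)) =
      exp (-τ * c) * (weightedEnergy τ s + c * partitionFunction τ s) := by
  simp only [weightedEnergy, partitionFunction, Multiset.map_map, Function.comp_def, mul_add,
    exp_add, ← Multiset.sum_map_mul_left, ← Multiset.sum_map_add]
  refine congrArg Multiset.sum (Multiset.map_congr rfl fun μ _ => ?_)
  ring

theorem gibbsEntropy_map_add (τ c : ℝ) (s : Multiset ℝ) :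
    gibbsEntropy τ (s.map (· + c)) = gibbsEntropy τ s := by
  rw [gibbsEntropy, gibbsEntropy, partitionFunction_map_add, weightedEnergy_map_add]
  rcases eq_or_ne (partitionFunction τ s) 0 with hZ | hZ
  · simp [hZ]
  · rw [log_mul (exp_ne_zero _) hZ, log_exp]
    field_simp
    ring

theorem tendsto_gibbsEntropy_nhds_zero {α : Type*} {l : Filter α} {τ : ℝ}
    {s : α → Multiset ℝ}
    (hZ : Tendsto (fun i => partitionFunction τ (s i)) l (𝓝 1))
    (hE : Tendsto (fun i => weightedEnergy τ (s i)) l (𝓝 0)) :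
    Tendsto (fun i => gibbsEntropy τ (s i)) l (𝓝 0) := by
  have hlog := (continuousAt_log one_ne_zero).tendsto.comp hZ
  simpa [gibbsEntropy] using ((hE.const_mul τ).div hZ one_ne_zero).add hlog

lemma tendsto_natCast_pow_mul_exp_neg_mul (k : ℕ) {b : ℝ} (hb : 0 < b) :
    Tendsto (fun n : ℕ => (n : ℝ) ^ k * exp (-b * n)) atTop (𝓝 0) := by
  simpa [Function.comp_def, rpow_natCast] using
    (tendsto_rpow_mul_exp_neg_mul_atTop_nhds_zero k b hb).comp tendsto_natCast_atTop_atTop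

noncomputable def completeBipartiteNegAdjSpectrum (n : ℕ) : Multiset ℝ :=
  -n ::ₘ n ::ₘ Multiset.replicate (2 * n - 2) 0

lemma gibbsEntropy_completeBipartiteNegAdjSpectrum (τ : ℝ) {n : ℕ} (hn : 1 ≤ n) :
    gibbsEntropy τ (completeBipartiteNegAdjSpectrum n) =
      τ * ((-(n : ℝ)) * exp (τ * n) + n * exp (-τ * n)) /
          (exp (τ * n) + exp (-τ * n) + (2 * n - 2)) +
        log (exp (τ * n) + exp (-τ * n) + (2 * n - 2)) := by
  simp [gibbsEntropy, partitionFunction, weightedEnergy, completeBipartiteNegAdjSpectrum,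
    Nat.cast_sub (by omega : 2 ≤ 2 * n), add_assoc]

theorem tendsto_gibbsEntropy_completeBipartiteNegAdjSpectrum {τ : ℝ} (hτ : 0 < τ) :
    Tendsto (fun n => gibbsEntropy τ (completeBipartiteNegAdjSpectrum n)) atTop (𝓝 0) := by
  have hdecay := fun k => tendsto_natCast_pow_mul_exp_neg_mul k hτ
  have hdecay₂ := fun k => tendsto_natCast_pow_mul_exp_neg_mul k (mul_pos two_pos hτ)
  refine (tendsto_gibbsEntropy_nhds_zero (s := fun n => (completeBipartiteNegAdjSpectrum n).map
    (· + (n : ℝ))) ?_ ?_).congr fun n => gibbsEntropy_map_add τ n _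
  · have := (tendsto_const_nhds (x := (1 : ℝ))).add (hdecay₂ 0) |>.add
      (((hdecay 1).const_mul 2).sub ((hdecay 0).const_mul 2))
    simp only [add_zero, mul_zero, sub_zero] at this
    refine this.congr' ?_
    filter_upwards [eventually_ge_atTop 1] with n hn
    simp only [partitionFunction, completeBipartiteNegAdjSpectrum, Multiset.map_cons,
      neg_add_cancel, Multiset.map_replicate, zero_add, mul_zero, exp_zero, Multiset.sum_cons,
      Multiset.sum_replicate, nsmul_eq_mul, Nat.cast_sub (by omega : 2 ≤ 2 * n), Nat.cast_mul,
      Nat.cast_ofNat]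
    ring_nf
  · have := (((hdecay₂ 1).const_mul 2).add ((hdecay 2).const_mul 2)).sub ((hdecay 1).const_mul 2)
    simp only [add_zero, mul_zero, sub_zero] at this
    refine this.congr' ?_
    filter_upwards [eventually_ge_atTop 1] with n hn
    simp only [weightedEnergy, completeBipartiteNegAdjSpectrum, Multiset.map_cons,
      neg_add_cancel, Multiset.map_replicate, zero_add, zero_mul, Multiset.sum_cons,
      Multiset.sum_replicate, nsmul_eq_mul, Nat.cast_sub (by omega : 2 ≤ 2 * n), Nat.cast_mul,
      Nat.cast_ofNat]
    ring_nf

/-- For the complete bipartite graph `K_{n,n}`, the matrix `−A(K_{n,n})` has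
eigenvalues `−n`, `n` (each once) and `0` with multiplicity `2n−2`; its
Gibbs entropy `S(ρ_{−A(K_{n,n})}^τ) = τ·(Σλe^{−τλ})/Z + log Z` tends to `0`. -/
theorem complete_bipartite_adjacency_entropy_vanishes (τ : ℝ) (hτ : 0 < τ) :
    Tendsto (fun n : ℕ =>
        τ * ((-(n : ℝ)) * Real.exp (τ * (n : ℝ)) + (n : ℝ) * Real.exp (-τ * (n : ℝ))) /
            (Real.exp (τ * (n : ℝ)) + Real.exp (-τ * (n : ℝ)) + (2 * (n : ℝ) - 2)) +
          Real.log (Real.exp (τ * (n : ℝ)) + Real.exp (-τ * (n : ℝ)) + (2 * (n : ℝ) - 2)))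
      atTop (nhds 0) :=
  (tendsto_gibbsEntropy_completeBipartiteNegAdjSpectrum hτ).congr' <|
    (eventually_ge_atTop 1).mono fun _ hn => gibbsEntropy_completeBipartiteNegAdjSpectrum τ hn
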